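/- arXiv:1404.3776 — 4 statements merged into one kernel-verified Lean document; each statement's English description precedes it below -/
import Mathlib

section
/- Under the equivalence relation of the previous setting, the number of equivalence classes is at most |D(C)| + 1, where D(C) is the set of chords of D that intersect the interior of C. -/
abbrev Plane := EuclideanSpace ℝ (Fin 2)

/-!
The line through a chord `ab` of a convex set `C` meets `C` only in the segment `ab`, so two points
of `C` off the chord are joined by a segment avoiding it iff they lie on the same side of that line.
Hence two vertices are related iff their side vectors `D → Bool` agree. Two non-crossing chords
are nested: one side of the first chord contains no point of the second, so that side, being
convex, lies on one side of the second chord. A family of side vectors with this nesting property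
on `n` coordinates has at most `n + 1` members: forgetting one coordinate merges at most one pair.
-/

section ConvexChords

open Set AffineMap

section Chord

variable {E : Type*} [AddCommGroup E] [Module ℝ E] [TopologicalSpace E] {C : Set E}

structure IsChord (C : Set E) (a b : E) : Prop where
  segment_subset : segment ℝ a b ⊆ C
  left_mem_frontier : a ∈ frontier C
  right_mem_frontier : b ∈ frontier C
  inter_interior_nonempty : (segment ℝ a b ∩ interior C).Nonempty

namespace IsChord

variable {a b : E}

theorem exists_lineMap_mem_interior (h : IsChord C a b) :
    ∃ s ∈ Ioo (0 : ℝ) 1, lineMap a b s ∈ interior C := by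
  obtain ⟨x, hx, hxC⟩ := h.inter_interior_nonempty
  rw [segment_eq_image_lineMap] at hx
  obtain ⟨s, ⟨hs0, hs1⟩, rfl⟩ := hx
  refine ⟨s, ⟨hs0.lt_of_ne ?_, hs1.lt_of_ne ?_⟩, hxC⟩ <;> rintro rfl
  · exact h.left_mem_frontier.2 (by simpa using hxC)
  · exact h.right_mem_frontier.2 (by simpa using hxC)

theorem ne (h : IsChord C a b) : a ≠ b := by
  rintro rfl
  obtain ⟨s, -, hs⟩ := h.exists_lineMap_mem_interior
  exact h.left_mem_frontier.2 (by simpa using hs)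

end IsChord

variable [IsTopologicalAddGroup E] [ContinuousConstSMul ℝ E]

theorem Convex.lineMap_mem_interior (hC : Convex ℝ C) {a b : E} {r s t : ℝ}
    (hs : lineMap a b s ∈ interior C) (ht : lineMap a b t ∈ closure C)
    (hr : r ∈ openSegment ℝ s t) : lineMap a b r ∈ interior C := by
  refine hC.openSegment_interior_closure_subset_interior hs ht ?_
  rw [← image_openSegment]
  exact mem_image_of_mem _ hr

namespace IsChord

variable {a b : E}

theorem openSegment_subset_interior (h : IsChord C a b) (hC : Convex ℝ C) :
    openSegment ℝ a b ⊆ interior C := by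
  obtain ⟨s, ⟨hs0, hs1⟩, hs⟩ := h.exists_lineMap_mem_interior
  rw [openSegment_eq_image_lineMap]
  rintro _ ⟨r, ⟨hr0, hr1⟩, rfl⟩
  rcases lt_trichotomy r s with hrs | rfl | hsr
  · refine hC.lineMap_mem_interior (t := 0) hs ?_ ?_
    · simpa using subset_closure (h.segment_subset (left_mem_segment ℝ a b))
    · rw [openSegment_symm, openSegment_eq_Ioo hs0]; exact ⟨hr0, hrs⟩
  · exact hs
  · refine hC.lineMap_mem_interior (t := 1) hs ?_ ?_
    · simpa using subset_closure (h.segment_subset (right_mem_segment ℝ a b))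
    · rw [openSegment_eq_Ioo hs1]; exact ⟨hsr, hr1⟩

theorem lineMap_mem_segment (h : IsChord C a b) (hC : Convex ℝ C) {t : ℝ}
    (ht : lineMap a b t ∈ C) :
    lineMap a b t ∈ segment ℝ a b := by
  obtain ⟨s, ⟨hs0, hs1⟩, hs⟩ := h.exists_lineMap_mem_interior
  rw [segment_eq_image_lineMap]
  refine mem_image_of_mem _ ⟨not_lt.1 fun ht0 => ?_, not_lt.1 fun ht1 => ?_⟩
  · refine h.left_mem_frontier.2 ?_
    simpa using hC.lineMap_mem_interior (r := 0) hs (subset_closure ht)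
      (by rw [openSegment_symm, openSegment_eq_Ioo (ht0.trans hs0)]; exact ⟨ht0, hs0⟩)
  · refine h.right_mem_frontier.2 ?_
    simpa using hC.lineMap_mem_interior (r := 1) hs (subset_closure ht)
      (by rw [openSegment_eq_Ioo (hs1.trans ht1)]; exact ⟨hs1, ht1⟩)

end IsChord

end Chord

noncomputable def orient (a b : Plane) : Plane →ᵃ[ℝ] ℝ where
  toFun x := (b 0 - a 0) * (x 1 - a 1) - (b 1 - a 1) * (x 0 - a 0)
  linear :=
    { toFun := fun v => (b 0 - a 0) * v 1 - (b 1 - a 1) * v 0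
      map_add' := fun v w => by simp only [PiLp.add_apply]; ring
      map_smul' := fun c v => by simp only [PiLp.smul_apply, smul_eq_mul, RingHom.id_apply]; ring }
  map_vadd' x v := by simp only [vadd_eq_add, PiLp.add_apply, LinearMap.coe_mk, AddHom.coe_mk]; ring

theorem orient_left (a b : Plane) : orient a b a = 0 := by
  simp [orient]

theorem orient_right (a b : Plane) : orient a b b = 0 := by
  simp [orient]; ring

theorem orient_eq_zero_of_mem_segment {a b x : Plane} (hx : x ∈ segment ℝ a b) :
    orient a b x = 0 := by
  have := mem_image_of_mem (orient a b) hx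
  rwa [image_segment, orient_left, orient_right, segment_same, mem_singleton_iff] at this

theorem exists_lineMap_eq_of_orient_eq_zero {a b z : Plane} (hab : a ≠ b)
    (hz : orient a b z = 0) : ∃ t : ℝ, lineMap a b t = z := by
  simp only [orient, AffineMap.coe_mk] at hz
  have hba : b 0 - a 0 ≠ 0 ∨ b 1 - a 1 ≠ 0 := by
    by_contra! h
    exact hab (by ext i; fin_cases i <;> simp <;> linarith [h.1, h.2])
  rcases hba with h0 | h1
  · refine ⟨(z 0 - a 0) / (b 0 - a 0), ?_⟩
    ext i; fin_cases i <;> simp [lineMap_apply_module] <;> field_simp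
    · ring
    · linear_combination (-1 : ℝ) * hz
  · refine ⟨(z 1 - a 1) / (b 1 - a 1), ?_⟩
    ext i; fin_cases i <;> simp [lineMap_apply_module] <;> field_simp
    · linear_combination hz
    · ring

theorem zero_mem_segment_iff {p q : ℝ} (hp : p ≠ 0) (hq : q ≠ 0) :
    (0 : ℝ) ∈ segment ℝ p q ↔ ¬(0 < p ↔ 0 < q) := by
  rw [segment_eq_uIcc, mem_uIcc]
  rcases hp.lt_or_gt with hp | hp <;> rcases hq.lt_or_gt with hq | hq <;>
    simp [hp, hq, hp.le, hq.le, hp.not_gt, hq.not_gt, hp.not_ge, hq.not_ge]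

theorem nonneg_or_nonpos_of_zero_notMem_openSegment {p q : ℝ}
    (h : (0 : ℝ) ∉ openSegment ℝ p q) :
    (0 ≤ p ∧ 0 ≤ q) ∨ (p ≤ 0 ∧ q ≤ 0) := by
  by_contra! hpq
  apply h
  rcases lt_or_ge p 0 with hp | hp
  · have hq := hpq.2 hp.le
    rw [openSegment_eq_Ioo (hp.trans hq)]
    exact ⟨hp, hq⟩
  · have hq := hpq.1 hp
    have hp' : 0 < p := hp.lt_of_ne fun h0 => (hpq.2 h0.ge).not_gt hq
    rw [openSegment_symm, openSegment_eq_Ioo (hq.trans hp')]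
    exact ⟨hq, hp'⟩

namespace IsChord

variable {C : Set Plane} {a b a' b' : Plane}

theorem mem_segment_of_orient_eq_zero (h : IsChord C a b) (hC : Convex ℝ C) {z : Plane}
    (hz : z ∈ C) (hz0 : orient a b z = 0) : z ∈ segment ℝ a b := by
  obtain ⟨t, rfl⟩ := exists_lineMap_eq_of_orient_eq_zero h.ne hz0
  exact h.lineMap_mem_segment hC hz

theorem orient_ne_zero (h : IsChord C a b) (hC : Convex ℝ C) {z : Plane} (hz : z ∈ C)
    (hz' : z ∉ segment ℝ a b) : orient a b z ≠ 0 :=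
  fun hz0 => hz' (h.mem_segment_of_orient_eq_zero hC hz hz0)

theorem segment_inter_eq_empty_iff (h : IsChord C a b) (hC : Convex ℝ C) {u v : Plane}
    (hu : u ∈ C) (hv : v ∈ C) (hu' : u ∉ segment ℝ a b) (hv' : v ∉ segment ℝ a b) :
    segment ℝ u v ∩ segment ℝ a b = ∅ ↔ (0 < orient a b u ↔ 0 < orient a b v) := by
  have hcross : (segment ℝ u v ∩ segment ℝ a b).Nonempty ↔
      (0 : ℝ) ∈ segment ℝ (orient a b u) (orient a b v) := by
    rw [← image_segment, mem_image]
    exact ⟨fun ⟨z, hz, hz'⟩ => ⟨z, hz, orient_eq_zero_of_mem_segment hz'⟩,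
      fun ⟨z, hz, hz0⟩ =>
        ⟨z, hz, h.mem_segment_of_orient_eq_zero hC (hC.segment_subset hu hv hz) hz0⟩⟩
  rw [← not_nonempty_iff_eq_empty, hcross,
    zero_mem_segment_iff (h.orient_ne_zero hC hu hu') (h.orient_ne_zero hC hv hv'), not_not]

theorem exists_side_eq_of_convex (h : IsChord C a b) (hC : Convex ℝ C) {K : Set Plane}
    (hK : Convex ℝ K) (hKC : K ⊆ C) (hdisj : Disjoint K (segment ℝ a b)) :
    ∃ β : Bool, ∀ x ∈ K, decide (0 < orient a b x) = β := by
  rcases K.eq_empty_or_nonempty with rfl | ⟨x₀, hx₀⟩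
  · exact ⟨true, by simp⟩
  refine ⟨decide (0 < orient a b x₀), fun x hx => decide_eq_decide.2 ?_⟩
  refine (h.segment_inter_eq_empty_iff hC (hKC hx) (hKC hx₀) (hdisj.notMem_of_mem_left hx)
    (hdisj.notMem_of_mem_left hx₀)).1 ?_
  exact (hdisj.mono_left (hK.segment_subset hx hx₀)).inter_eq

theorem orient_nonneg_or_nonpos_on_segment (h : IsChord C a b) (h' : IsChord C a' b')
    (hC : Convex ℝ C) (hnc : openSegment ℝ a b ∩ openSegment ℝ a' b' = ∅) :
    (∀ w ∈ segment ℝ a' b', 0 ≤ orient a b w) ∨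
      (∀ w ∈ segment ℝ a' b', orient a b w ≤ 0) := by
  have hzero : (0 : ℝ) ∉ openSegment ℝ (orient a b a') (orient a b b') := by
    rw [← image_openSegment]
    rintro ⟨w, hw, hw0⟩
    have hwC := h'.openSegment_subset_interior hC hw
    rcases (insert_endpoints_openSegment ℝ a b).symm ▸
      h.mem_segment_of_orient_eq_zero hC (interior_subset hwC) hw0 with rfl | rfl | hwab
    · exact h.left_mem_frontier.2 hwC
    · exact h.right_mem_frontier.2 hwC
    · exact (hnc ▸ ⟨hwab, hw⟩ : w ∈ (∅ : Set Plane))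
  have himage :
      ∀ w ∈ segment ℝ a' b', orient a b w ∈ segment ℝ (orient a b a') (orient a b b') :=
    fun w hw => image_segment ℝ (orient a b) a' b' ▸ mem_image_of_mem _ hw
  rcases nonneg_or_nonpos_of_zero_notMem_openSegment hzero with ⟨hp, hq⟩ | ⟨hp, hq⟩
  · exact .inl fun w hw => (convex_Ici 0).segment_subset hp hq (himage w hw)
  · exact .inr fun w hw => (convex_Iic 0).segment_subset hp hq (himage w hw)

theorem exists_nested_sides (h : IsChord C a b) (h' : IsChord C a' b') (hC : Convex ℝ C)
    (hnc : openSegment ℝ a b ∩ openSegment ℝ a' b' = ∅) :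
    ∃ α β : Bool, ∀ x ∈ C, x ∉ segment ℝ a b →
      decide (0 < orient a b x) = α → decide (0 < orient a' b' x) = β := by
  rcases h.orient_nonneg_or_nonpos_on_segment h' hC hnc with hpos | hneg
  · obtain ⟨β, hβ⟩ := h'.exists_side_eq_of_convex hC
      (hC.inter ((convex_Iio 0).affine_preimage (orient a b))) inter_subset_left
      (disjoint_left.2 fun w hw hw' => (hpos w hw').not_gt hw.2)
    refine ⟨false, β, fun x hx hx' hxα => hβ x ⟨hx, ?_⟩⟩
    exact (not_lt.1 (by simpa using hxα)).lt_of_ne (h.orient_ne_zero hC hx hx')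
  · obtain ⟨β, hβ⟩ := h'.exists_side_eq_of_convex hC
      (hC.inter ((convex_Ioi 0).affine_preimage (orient a b))) inter_subset_left
      (disjoint_left.2 fun w hw hw' => (hneg w hw').not_gt hw.2)
    exact ⟨true, β, fun x hx _ hxα => hβ x ⟨hx, by simpa using hxα⟩⟩

end IsChord

end ConvexChords

section SignVectors

open Finset Function

variable {ι : Type*} [DecidableEq ι]

open Classical in
theorem card_le_card_image_update_add_one {F : Finset (ι → Bool)} {I : Finset ι} {i : ι}
    (hout : ∀ f ∈ F, ∀ g ∈ F, ∀ j ∉ insert i I, f j = g j)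
    (hnest : ∀ j ∈ I, ∃ α β : Bool, ∀ f ∈ F, f i = α → f j = β) :
    #F ≤ #(F.image (update · i false)) + 1 := by
  set π : (ι → Bool) → ι → Bool := (update · i false)
  set F₀ := F.filter (· i = false)
  set F₁ := F.filter (¬ · i = false)
  have hinj : #(F₁.image π) = #F₁ := by
    refine card_image_of_injOn fun f hf g hg hfg => funext fun j => ?_
    by_cases hj : j = i
    · subst hj
      rw [Bool.eq_true_of_not_eq_false (mem_filter.1 hf).2,
        Bool.eq_true_of_not_eq_false (mem_filter.1 hg).2]
    · simpa [π, update_of_ne hj] using congrFun hfg j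
  -- An element of `F₀ ∩ π F₁` comes from two vectors of `F` differing only at `i`,
  -- and `hnest` then forces each of its other coordinates.
  have hinter : #(F₀ ∩ F₁.image π) ≤ 1 := by
    refine card_le_one.2 fun g hg g' hg' => funext fun j => ?_
    by_contra hne
    have hj : j ≠ i := by
      rintro rfl
      simp only [F₀, mem_inter, mem_filter] at hg hg'
      exact hne (hg.1.2.trans hg'.1.2.symm)
    have hjI : j ∈ I := by
      by_contra hjI
      simp only [F₀, mem_inter, mem_filter] at hg hg'
      exact hne (hout g hg.1.1 g' hg'.1.1 j (by simp [hj, hjI]))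
    obtain ⟨α, β, hαβ⟩ := hnest j hjI
    have hforced : ∀ x ∈ F₀ ∩ F₁.image π, x j = β := by
      intro x hx
      simp only [F₀, F₁, mem_inter, mem_filter, mem_image] at hx
      obtain ⟨⟨hxF, hxi⟩, f, ⟨hfF, hfi⟩, rfl⟩ := hx
      cases α
      · exact hαβ _ hxF hxi
      · simpa [π, update_of_ne hj] using hαβ f hfF (by simpa using hfi)
    exact hne ((hforced g hg).trans (hforced g' hg').symm)
  have hsplit : #F₀ + #F₁ = #F := card_filter_add_card_filter_not _
  have hcover : F₀ ∪ F₁.image π ⊆ F.image π := by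
    refine union_subset (fun f hf => mem_image.2 ⟨f, (mem_filter.1 hf).1, ?_⟩)
      (image_subset_image (filter_subset _ _))
    change update f i false = f
    rw [← (mem_filter.1 hf).2]
    exact update_eq_self i f
  have hunion := card_union_add_card_inter F₀ (F₁.image π)
  have hle := card_le_card hcover
  omega

theorem card_le_card_add_one_of_nested (I : Finset ι) (F : Finset (ι → Bool))
    (hout : ∀ f ∈ F, ∀ g ∈ F, ∀ j ∉ I, f j = g j)
    (hnest : ∀ i ∈ I, ∀ j ∈ I, i ≠ j →
      ∃ α β : Bool, ∀ f ∈ F, f i = α → f j = β) :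
    #F ≤ #I + 1 := by
  classical
  induction I using Finset.induction_on generalizing F with
  | empty =>
    exact (card_le_one.2 fun f hf g hg => funext fun j => hout f hf g hg j (notMem_empty j)).trans
      le_add_self
  | insert i I hi ih =>
    have hG : #(F.image (update · i false)) ≤ #I + 1 := by
      refine ih _ ?_ ?_
      · simp only [mem_image]
        rintro _ ⟨f, hf, rfl⟩ _ ⟨g, hg, rfl⟩ j hj
        by_cases hji : j = i
        · simp [hji]
        · simpa [update_of_ne hji] using hout f hf g hg j (by simp [hji, hj])
      · intro j hj k hk hjk
        obtain ⟨α, β, hαβ⟩ := hnest j (mem_insert_of_mem hj) k (mem_insert_of_mem hk) hjk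
        have hji : j ≠ i := ne_of_mem_of_not_mem hj hi
        have hki : k ≠ i := ne_of_mem_of_not_mem hk hi
        refine ⟨α, β, ?_⟩
        simp only [mem_image]
        rintro _ ⟨f, hf, rfl⟩
        simpa [update_of_ne hji, update_of_ne hki] using hαβ f hf
    have hF := card_le_card_image_update_add_one hout fun j hj =>
      hnest i (mem_insert_self i I) j (mem_insert_of_mem hj) (ne_of_mem_of_not_mem hj hi).symm
    rw [card_insert_of_notMem hi]
    omega

end SignVectors

theorem exists_fin_iff_eq_of_forall_mem {α β : Type*} (τ : α → β) (F : Finset β)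
    (hτ : ∀ a, τ a ∈ F) {n : ℕ} (hn : F.card ≤ n) :
    ∃ f : α → Fin n, ∀ a b, τ a = τ b ↔ f a = f b :=
  ⟨fun a => Fin.castLE hn (F.equivFin ⟨τ a, hτ a⟩), fun a b => by
    rw [Fin.castLE_inj, Equiv.apply_eq_iff_eq, Subtype.mk.injEq]⟩

/-- In the setting of the chord equivalence relation, the number of equivalence
classes is at most `|D| + 1`, where `D` is the set of pairwise non-crossing chords
of the convex polygon `C` that intersect its interior.  This is expressed by a
classifying function into `Fin (D.card + 1)`. -/
theorem chord_relation_classes_le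
    (C : Set Plane) (hC : Convex ℝ C)
    (V : Finset Plane) (hV : ↑V ⊆ C)
    (D : Finset (Plane × Plane))
    (hchord : ∀ d ∈ D, segment ℝ d.1 d.2 ⊆ C ∧
      d.1 ∈ frontier C ∧ d.2 ∈ frontier C)
    (hint : ∀ d ∈ D, (segment ℝ d.1 d.2 ∩ interior C).Nonempty)
    (hnc : ∀ d ∈ D, ∀ d' ∈ D, d ≠ d' →
      openSegment ℝ d.1 d.2 ∩ openSegment ℝ d'.1 d'.2 = ∅) :
    ∃ f : {p : Plane // p ∈ V ∧ ∀ d ∈ D, p ∉ segment ℝ d.1 d.2} → Fin (D.card + 1),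
      ∀ u v : {p : Plane // p ∈ V ∧ ∀ d ∈ D, p ∉ segment ℝ d.1 d.2}, ((∀ d ∈ D, segment ℝ (u : Plane) (v : Plane) ∩ segment ℝ d.1 d.2 = ∅) ↔
        f u = f v) := by
  classical
  have hD : ∀ d ∈ D, IsChord C d.1 d.2 := fun d hd =>
    ⟨(hchord d hd).1, (hchord d hd).2.1, (hchord d hd).2.2, hint d hd⟩
  let side (x : Plane) (d : D) : Bool := decide (0 < orient d.1.1 d.1.2 x)
  set W := V.filter fun p => ∀ d ∈ D, p ∉ segment ℝ d.1 d.2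
  have hcard : (W.image side).card ≤ D.card + 1 := by
    refine (card_le_card_add_one_of_nested Finset.univ (W.image side) (by simp)
      fun i _ j _ hij => ?_).trans_eq (by simp)
    obtain ⟨α, β, hαβ⟩ := (hD i i.2).exists_nested_sides (hD j j.2) hC
      (hnc i i.2 j j.2 (Subtype.val_injective.ne hij))
    refine ⟨α, β, ?_⟩
    simp only [Finset.mem_image, W, Finset.mem_filter]
    rintro _ ⟨x, ⟨hxV, hx⟩, rfl⟩
    exact hαβ x (hV hxV) (hx i i.2)
  obtain ⟨f, hf⟩ := exists_fin_iff_eq_of_forall_mem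
    (α := {p : Plane // p ∈ V ∧ ∀ d ∈ D, p ∉ segment ℝ d.1 d.2})
    (side ·) (W.image side)
    (fun u => Finset.mem_image_of_mem _ (Finset.mem_filter.2 u.2)) hcard
  refine ⟨f, fun u v => Iff.trans ?_ (hf u v)⟩
  simp only [funext_iff, side, decide_eq_decide, Subtype.forall]
  exact forall₂_congr fun d hd =>
    (hD d hd).segment_inter_eq_empty_iff hC (hV u.2.1) (hV v.2.1) (u.2.2 d hd) (v.2.2 d hd)
end

section
/- Let h1, h2, h3 be closed half-planes with h1 ∩ h2 ∩ h3 equal to a triangle T. Let R be a finite set of points contained in T whose convex hull is 2-dimensional. For i = 1, 2, 3, let p_i be a vertex of Conv(R) closest to the bounding line of h_i, and let W_i be the wedge with apex p_i bounded by the rays containing the two edges of Conv(R) incident to p_i (the wedge containing Conv(R)). Then W_i ⊆ h_i, and hence W_1 ∩ W_2 ∩ W_3 ⊆ T. -/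
/-! On the half-plane `⟪n, x⟫ ≤ c` the distance to the bounding line is `(c - ⟪n, x⟫) / ‖n‖`,
so a point of `R` closest to that line maximizes `⟪n, ·⟫` over `R`. Both edge directions
`q - p` and `r - p` then do not increase `⟪n, ·⟫`, hence neither does any point of the wedge. -/

open Metric
open scoped RealInnerProductSpace

section Hyperplane

variable {E : Type*} [NormedAddCommGroup E] [InnerProductSpace ℝ E]

theorem infDist_hyperplane_eq {n : E} (hn : n ≠ 0) (c : ℝ) (x : E) :
    infDist x {y | ⟪n, y⟫ = c} = |⟪n, x⟫ - c| / ‖n‖ := by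
  have hnorm : 0 < ‖n‖ := norm_pos_iff.2 hn
  -- the foot of the perpendicular from `x`
  set y₀ : E := x + ((c - ⟪n, x⟫) / ‖n‖ ^ 2) • n
  have hy₀ : ⟪n, y₀⟫ = c := by
    simp only [y₀, inner_add_right, inner_smul_right, real_inner_self_eq_norm_sq]
    field_simp
    ring
  apply le_antisymm
  · calc infDist x {y | ⟪n, y⟫ = c} ≤ dist x y₀ := infDist_le_dist_of_mem hy₀
      _ = |⟪n, x⟫ - c| / ‖n‖ := by
          rw [dist_eq_norm, show x - y₀ = ((⟪n, x⟫ - c) / ‖n‖ ^ 2) • n by simp only [y₀]; module,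
            norm_smul, Real.norm_eq_abs, abs_div, abs_of_pos (pow_pos hnorm 2)]
          field_simp
  · refine (le_infDist ⟨y₀, hy₀⟩).2 fun y (hy : ⟪n, y⟫ = c) => ?_
    rw [div_le_iff₀ hnorm, dist_eq_norm, mul_comm, ← hy, ← inner_sub_right]
    exact abs_real_inner_le_norm n (x - y)

theorem infDist_hyperplane_eq_of_mem_halfSpace {n : E} (hn : n ≠ 0) {c : ℝ} {x : E}
    (hx : ⟪n, x⟫ ≤ c) : infDist x {y | ⟪n, y⟫ = c} = (c - ⟪n, x⟫) / ‖n‖ := by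
  rw [infDist_hyperplane_eq hn, abs_sub_comm, abs_of_nonneg (sub_nonneg.2 hx)]

theorem inner_le_of_infDist_hyperplane_le {n : E} (hn : n ≠ 0) {c : ℝ} {x y : E}
    (hx : ⟪n, x⟫ ≤ c) (hy : ⟪n, y⟫ ≤ c)
    (h : infDist x {z | ⟪n, z⟫ = c} ≤ infDist y {z | ⟪n, z⟫ = c}) : ⟪n, y⟫ ≤ ⟪n, x⟫ := by
  rw [infDist_hyperplane_eq_of_mem_halfSpace hn hx, infDist_hyperplane_eq_of_mem_halfSpace hn hy,
    div_le_div_iff_of_pos_right (norm_pos_iff.2 hn)] at h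
  linarith

theorem wedge_subset_halfSpace {n p q r : E} {c : ℝ} (hp : ⟪n, p⟫ ≤ c)
    (hq : ⟪n, q⟫ ≤ ⟪n, p⟫) (hr : ⟪n, r⟫ ≤ ⟪n, p⟫) :
    {z | ∃ s t : ℝ, 0 ≤ s ∧ 0 ≤ t ∧ z = p + s • (q - p) + t • (r - p)} ⊆ {x | ⟪n, x⟫ ≤ c} := by
  rintro _ ⟨s, t, hs, ht, rfl⟩
  simp only [Set.mem_ofPred_eq, inner_add_right, inner_smul_right, inner_sub_right]
  linarith [mul_nonneg hs (sub_nonneg.2 hq), mul_nonneg ht (sub_nonneg.2 hr)]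

end Hyperplane

theorem wedges_subset_triangle_general
    (n : Fin 3 → Plane) (c : Fin 3 → ℝ) (hn : ∀ i, n i ≠ 0)
    (T : Set Plane)
    (hT : T = ⋂ i, {x : Plane | (inner ℝ (n i) x : ℝ) ≤ c i})
    (R : Finset Plane) (hRT : ↑R ⊆ T)
    (p q r : Fin 3 → Plane)
    (hp : ∀ i, p i ∈ R) (hq : ∀ i, q i ∈ R) (hr : ∀ i, r i ∈ R)
    (hmin : ∀ i, ∀ x ∈ R, Metric.infDist (p i) {y : Plane | (inner ℝ (n i) y : ℝ) = c i}
      ≤ Metric.infDist x {y : Plane | (inner ℝ (n i) y : ℝ) = c i})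
    (W : Fin 3 → Set Plane)
    (hW : ∀ i, W i = {z : Plane | ∃ s t : ℝ, 0 ≤ s ∧ 0 ≤ t ∧
      z = p i + s • (q i - p i) + t • (r i - p i)}) :
    (∀ i, W i ⊆ {x : Plane | (inner ℝ (n i) x : ℝ) ≤ c i}) ∧ (⋂ i, W i) ⊆ T := by
  have hR : ∀ x ∈ R, ∀ i, ⟪n i, x⟫ ≤ c i := fun x hx =>
    Set.mem_iInter.1 (hT ▸ hRT hx)
  have hmax : ∀ i, ∀ x ∈ R, ⟪n i, x⟫ ≤ ⟪n i, p i⟫ := fun i x hx =>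
    inner_le_of_infDist_hyperplane_le (hn i) (hR _ (hp i) i) (hR x hx i) (hmin i x hx)
  have hWi : ∀ i, W i ⊆ {x | ⟪n i, x⟫ ≤ c i} := fun i =>
    hW i ▸ wedge_subset_halfSpace (hR _ (hp i) i) (hmax i _ (hq i)) (hmax i _ (hr i))
  exact ⟨hWi, fun x hx => hT ▸ Set.mem_iInter.2 fun i => hWi i (Set.mem_iInter.1 hx i)⟩

/-- Let `h₁, h₂, h₃` be closed half-planes whose intersection is the triangle `T`,
and let `R ⊆ T` be a finite set with 2-dimensional convex hull.  For each `i` let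
`p i` be a vertex of `Conv(R)` closest to the bounding line of `h i`, and let `W i`
be the wedge at `p i` spanned by the two convex-hull edges incident to `p i`
(with second endpoints `q i` and `r i`).  Then `W i ⊆ h i`, and hence
`W 1 ∩ W 2 ∩ W 3 ⊆ T`. -/
theorem wedges_subset_triangle
    (n : Fin 3 → Plane) (c : Fin 3 → ℝ) (hn : ∀ i, n i ≠ 0)
    (T : Set Plane)
    (hT : T = ⋂ i, {x : Plane | (inner ℝ (n i) x : ℝ) ≤ c i})
    (R : Finset Plane) (hRT : ↑R ⊆ T)
    (hdim : affineSpan ℝ (R : Set Plane) = ⊤)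
    (p q r : Fin 3 → Plane)
    (hp : ∀ i, p i ∈ R) (hq : ∀ i, q i ∈ R) (hr : ∀ i, r i ∈ R)
    (hqp : ∀ i, q i ≠ p i) (hrp : ∀ i, r i ≠ p i)
    (hpvert : ∀ i, p i ∈ Set.extremePoints ℝ (convexHull ℝ (R : Set Plane)))
    (hedgeq : ∀ i, segment ℝ (p i) (q i) ⊆ frontier (convexHull ℝ (R : Set Plane)))
    (hedger : ∀ i, segment ℝ (p i) (r i) ⊆ frontier (convexHull ℝ (R : Set Plane)))
    (hmin : ∀ i, ∀ x ∈ R, Metric.infDist (p i) {y : Plane | (inner ℝ (n i) y : ℝ) = c i}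
      ≤ Metric.infDist x {y : Plane | (inner ℝ (n i) y : ℝ) = c i})
    (W : Fin 3 → Set Plane)
    (hW : ∀ i, W i = {z : Plane | ∃ s t : ℝ, 0 ≤ s ∧ 0 ≤ t ∧
      z = p i + s • (q i - p i) + t • (r i - p i)}) :
    (∀ i, W i ⊆ {x : Plane | (inner ℝ (n i) x : ℝ) ≤ c i}) ∧ (⋂ i, W i) ⊆ T :=
  wedges_subset_triangle_general n c hn T hT R hRT p q r hp hq hr hmin W hW
end

section
/- For every point p in a finite set R ⊆ ℝ² that is a vertex of Conv(R), and every closed half-plane h containing R whose bounding line is at minimal distance from p among points of R, the wedge at p spanned by the two convex-hull edges incident to p is contained in h. -/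
open RealInnerProductSpace

section

variable {E : Type*} [NormedAddCommGroup E] [InnerProductSpace ℝ E]

theorem infDist_setOf_inner_eq {n : E} (hn : n ≠ 0) (c : ℝ) (x : E) :
    Metric.infDist x {y | ⟪n, y⟫ = c} = |c - ⟪n, x⟫| / ‖n‖ := by
  have hn' : 0 < ‖n‖ := norm_pos_iff.mpr hn
  set foot : E := x + ((c - ⟪n, x⟫) / ‖n‖ ^ 2) • n
  have hfoot : ⟪n, foot⟫ = c := by
    simp only [foot, inner_add_right, inner_smul_right, real_inner_self_eq_norm_sq]
    field_simp
    ring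
  apply le_antisymm
  · calc Metric.infDist x {y | ⟪n, y⟫ = c} ≤ dist x foot := Metric.infDist_le_dist_of_mem hfoot
      _ = |c - ⟪n, x⟫| / ‖n‖ := by
        rw [dist_eq_norm, sub_add_cancel_left, norm_neg, norm_smul, Real.norm_eq_abs,
          abs_div, abs_of_pos (by positivity : (0 : ℝ) < ‖n‖ ^ 2)]
        field_simp
  · refine (Metric.le_infDist ⟨foot, hfoot⟩).mpr fun y (hy : ⟪n, y⟫ = c) => ?_
    rw [div_le_iff₀ hn', dist_comm, dist_eq_norm, mul_comm, ← hy, ← inner_sub_right]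
    exact abs_real_inner_le_norm n (y - x)

theorem inner_le_of_infDist_le {n : E} (hn : n ≠ 0) {c : ℝ} {x p : E}
    (hx : ⟪n, x⟫ ≤ c) (hp : ⟪n, p⟫ ≤ c)
    (hdist : Metric.infDist p {y | ⟪n, y⟫ = c} ≤ Metric.infDist x {y | ⟪n, y⟫ = c}) :
    ⟪n, x⟫ ≤ ⟪n, p⟫ := by
  rw [infDist_setOf_inner_eq hn, infDist_setOf_inner_eq hn, abs_of_nonneg (sub_nonneg.mpr hx),
    abs_of_nonneg (sub_nonneg.mpr hp), div_le_div_iff_of_pos_right (norm_pos_iff.mpr hn)] at hdist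
  linarith

theorem inner_add_smul_sub_add_smul_sub_le {n p q r : E} (hq : ⟪n, q⟫ ≤ ⟪n, p⟫)
    (hr : ⟪n, r⟫ ≤ ⟪n, p⟫) {s t : ℝ} (hs : 0 ≤ s) (ht : 0 ≤ t) :
    ⟪n, p + s • (q - p) + t • (r - p)⟫ ≤ ⟪n, p⟫ := by
  simp only [inner_add_right, inner_smul_right, inner_sub_right]
  nlinarith

end

theorem wedge_subset_halfplane_general
    (R : Finset Plane) (p q r : Plane)
    (hp : p ∈ R) (hq : q ∈ R) (hr : r ∈ R)
    (n : Plane) (c : ℝ) (hn : n ≠ 0)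
    (hRh : ∀ x ∈ R, (inner ℝ n x : ℝ) ≤ c)
    (hmin : ∀ x ∈ R, Metric.infDist p {y : Plane | (inner ℝ n y : ℝ) = c}
      ≤ Metric.infDist x {y : Plane | (inner ℝ n y : ℝ) = c}) :
    ∀ s t : ℝ, 0 ≤ s → 0 ≤ t → (inner ℝ n (p + s • (q - p) + t • (r - p)) : ℝ) ≤ c := by
  have hmax : ∀ x ∈ R, ⟪n, x⟫ ≤ ⟪n, p⟫ := fun x hx =>
    inner_le_of_infDist_le hn (hRh x hx) (hRh p hp) (hmin x hx)
  intro s t hs ht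
  exact (inner_add_smul_sub_add_smul_sub_le (hmax q hq) (hmax r hr) hs ht).trans (hRh p hp)

/-- If `p` is a vertex of the convex hull of a finite planar set `R`, `h` is a closed
half-plane `{x | ⟪n, x⟫ ≤ c}` containing `R` whose bounding line is at minimal distance
from `p` among points of `R`, and `q, r ∈ R` span the two convex-hull edges incident
to `p`, then the wedge at `p` spanned by these two edge directions is contained in `h`. -/
theorem wedge_subset_halfplane
    (R : Finset Plane) (p q r : Plane)
    (hp : p ∈ R) (hq : q ∈ R) (hr : r ∈ R) (hqp : q ≠ p) (hrp : r ≠ p)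
    (hpvert : p ∈ Set.extremePoints ℝ (convexHull ℝ (R : Set Plane)))
    (hedgeq : segment ℝ p q ⊆ frontier (convexHull ℝ (R : Set Plane)))
    (hedger : segment ℝ p r ⊆ frontier (convexHull ℝ (R : Set Plane)))
    (n : Plane) (c : ℝ) (hn : n ≠ 0)
    (hRh : ∀ x ∈ R, (inner ℝ n x : ℝ) ≤ c)
    (hmin : ∀ x ∈ R, Metric.infDist p {y : Plane | (inner ℝ n y : ℝ) = c}
      ≤ Metric.infDist x {y : Plane | (inner ℝ n y : ℝ) = c}) :
    ∀ s t : ℝ, 0 ≤ s → 0 ≤ t → (inner ℝ n (p + s • (q - p) + t • (r - p)) : ℝ) ≤ c :=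
  wedge_subset_halfplane_general R p q r hp hq hr n c hn hRh hmin
end

section
/- Let D' be a pairwise interior-disjoint triangle cover and C_j a simple closed polygonal curve. Every triangle of D' whose relative interior is not intersected by C_j lies entirely inside (closure of interior) or entirely outside (closure of exterior) of C_j, and the inside and outside parts, together with any cover of the points in the crossed triangles split by side, again cover all of S'. -/
lemma subset_closure_interior_of_convex {E : Type*} [NormedAddCommGroup E]
    [NormedSpace ℝ E] {s : Set E} (hs : Convex ℝ s) (hne : (interior s).Nonempty) :
    s ⊆ closure (interior s) := by
  obtain ⟨y, hy⟩ := hne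
  intro x hx
  have h1 : Filter.Tendsto (fun t : ℝ => x + t • (y - x)) (nhds 0) (nhds x) := by
    have : Continuous (fun t : ℝ => x + t • (y - x)) := by continuity
    simpa using this.tendsto (0 : ℝ)
  have h2 : Filter.Tendsto (fun t : ℝ => x + t • (y - x))
      (nhdsWithin 0 (Set.Ioc 0 1)) (nhds x) := h1.mono_left nhdsWithin_le_nhds
  have hnb : (nhdsWithin (0:ℝ) (Set.Ioc 0 1)).NeBot := by
    apply mem_closure_iff_nhdsWithin_neBot.mp
    have : (0:ℝ) ∈ closure (Set.Ioc (0:ℝ) 1) := by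
      rw [closure_Ioc one_ne_zero.symm]; simp
    exact this
  refine mem_closure_of_tendsto h2 ?_
  filter_upwards [self_mem_nhdsWithin] with t ht
  exact hs.add_smul_sub_mem_interior hx hy ht

lemma tri_interior_nonempty {a b c : Plane} (h : ¬ Collinear ℝ ({a, b, c} : Set Plane)) :
    (interior (convexHull ℝ ({a, b, c} : Set Plane))).Nonempty := by
  rw [interior_convexHull_nonempty_iff_affineSpan_eq_top]
  have hai : AffineIndependent ℝ ![a, b, c] :=
    affineIndependent_iff_not_collinear_set.2 h
  have hcard : Fintype.card (Fin 3) = Module.finrank ℝ Plane + 1 := by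
    simp [finrank_euclideanSpace_fin]
  have := hai.affineSpan_eq_top_iff_card_eq_finrank_add_one.2 hcard
  have himg : Set.range ![a, b, c] = ({a, b, c} : Set Plane) := by
    ext x
    simp [Matrix.range_cons, Matrix.range_empty]
    tauto
  rwa [himg] at this

/-- Let `D'` be a family of nondegenerate triangles with pairwise disjoint interiors
covering a finite point set `S'`, and let `Sig` be a simple closed polygonal (Jordan)
curve with interior component `U` and exterior component `W`.  Writing `bad` for the
triangles of `D'` whose interior meets `Sig`:
(a) every triangle of `D' \ bad` lies entirely in the closure of `U` or entirely in
the closure of `W`; and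
(b) if `N` covers the points of `S'` lying in the bad triangles, then the non-bad
triangles together with `N` cover all of `S'`. -/
theorem disjoint_cover_split_by_jordan_curve [DecidableEq (Plane × Plane × Plane)]
    (Sig U W : Set Plane)
    (γ : ℝ → Plane) (hγcont : ContinuousOn γ (Set.Icc 0 1))
    (hγim : Sig = γ '' Set.Icc 0 1) (hγcl : γ 0 = γ 1)
    (hγinj : Set.InjOn γ (Set.Ico 0 1))
    (hUopen : IsOpen U) (hWopen : IsOpen W) (hUW : Disjoint U W)
    (hUconn : IsConnected U) (hWconn : IsConnected W)
    (hcompl : U ∪ W = Sigᶜ)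
    (S' : Finset Plane) (D' : Finset (Plane × Plane × Plane))
    (hnd : ∀ t ∈ D', ¬ Collinear ℝ ({t.1, t.2.1, t.2.2} : Set Plane))
    (hdisj : ∀ t ∈ D', ∀ t' ∈ D', t ≠ t' →
      interior (convexHull ℝ ({t.1, t.2.1, t.2.2} : Set Plane)) ∩
        interior (convexHull ℝ ({t'.1, t'.2.1, t'.2.2} : Set Plane)) = ∅)
    (hcover : ↑S' ⊆ ⋃ t ∈ D', convexHull ℝ ({t.1, t.2.1, t.2.2} : Set Plane))
    (bad : Finset (Plane × Plane × Plane)) (hbadsub : bad ⊆ D')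
    (hbad : ∀ t ∈ D', (t ∈ bad ↔
      (interior (convexHull ℝ ({t.1, t.2.1, t.2.2} : Set Plane)) ∩ Sig).Nonempty)) :
    (∀ t ∈ D', t ∉ bad →
      convexHull ℝ ({t.1, t.2.1, t.2.2} : Set Plane) ⊆ closure U ∨
      convexHull ℝ ({t.1, t.2.1, t.2.2} : Set Plane) ⊆ closure W) ∧
    (∀ N : Set Plane,
      (↑S' ∩ ⋃ t ∈ bad, convexHull ℝ ({t.1, t.2.1, t.2.2} : Set Plane)) ⊆ N →
      ↑S' ⊆ (⋃ t ∈ D' \ bad, convexHull ℝ ({t.1, t.2.1, t.2.2} : Set Plane)) ∪ N) := by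
  constructor
  · intro t ht htb
    set K := convexHull ℝ ({t.1, t.2.1, t.2.2} : Set Plane) with hK
    have hconv : Convex ℝ K := convex_convexHull ℝ _
    have hne : (interior K).Nonempty := tri_interior_nonempty (hnd t ht)
    -- interior K avoids Sig
    have hdisjSig : interior K ∩ Sig = ∅ := by
      by_contra h
      exact htb ((hbad t ht).2 (Set.nonempty_iff_ne_empty.2 h))
    have hsub : interior K ⊆ U ∪ W := by
      rw [hcompl]
      intro x hx hxS
      exact Set.eq_empty_iff_forall_notMem.1 hdisjSig x ⟨hx, hxS⟩
    have hpc : IsPreconnected (interior K) := (hconv.interior).isPreconnected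
    have := IsPreconnected.subset_or_subset hUopen hWopen hUW ?_ hpc
    · rcases this with h | h
      · left
        calc K ⊆ closure (interior K) := subset_closure_interior_of_convex hconv hne
          _ ⊆ closure U := closure_mono h
      · right
        calc K ⊆ closure (interior K) := subset_closure_interior_of_convex hconv hne
          _ ⊆ closure W := closure_mono h
    · exact hsub
  · intro N hN x hx
    obtain ⟨t, ht, hxt⟩ := Set.mem_iUnion₂.1 (hcover hx)
    by_cases htb : t ∈ bad
    · exact Or.inr (hN ⟨hx, Set.mem_iUnion₂.2 ⟨t, htb, hxt⟩⟩)
    · exact Or.inl (Set.mem_iUnion₂.2 ⟨t, Finset.mem_sdiff.2 ⟨ht, htb⟩, hxt⟩)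
end
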